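/- An M weight-bounded linear weighted graph G with mixed (strict and non-strict) constraints is realizable if and only if there exists a time-stamping modulo M, tsm, that weakly satisfies G and such that there are no vertices u, v with (u,v) ∈ gtFr and (v,u) ∈ geqFr*, where geqFr* is the reflexive-transitive closure of geqFr. -/

import Mathlib

open Finset

/-- A weighted constraint edge: `ts tgt - ts src ◁ wt` where ◁ is `<` if `strict` else `≤`. -/
structure WEdge where
  src : ℕ
  strict : Bool
  wt : ℤ
  tgt : ℕ
deriving DecidableEq

/-- `ts` satisfies the constraint of edge `e`. -/
def satEdge (ts : ℕ → ℝ) (e : WEdge) : Prop :=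
  if e.strict then ts e.tgt - ts e.src < (e.wt : ℝ) else ts e.tgt - ts e.src ≤ (e.wt : ℝ)

/-- `ts` realizes the linear weighted graph on vertices `{1,…,n}` with edge set `E`:
monotone w.r.t. the linear order and all difference constraints hold. -/
def Realizes (n : ℕ) (E : Finset WEdge) (ts : ℕ → ℝ) : Prop :=
  (∀ u v : ℕ, 1 ≤ u → u ≤ v → v ≤ n → ts u ≤ ts v) ∧ ∀ e ∈ E, satEdge ts e

/-- Integer parts of consecutive time-stamps differ by at least 0 and at most `M - 1`. -/
def SlowlyMonotone (M : ℤ) (n : ℕ) (ts : ℕ → ℝ) : Prop :=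
  ∀ i : ℕ, 1 ≤ i → i < n → 0 ≤ ⌊ts (i + 1)⌋ - ⌊ts i⌋ ∧ ⌊ts (i + 1)⌋ - ⌊ts i⌋ ≤ M - 1

/-- All edges of the graph have endpoints in `{1,…,n}`. -/
def InGraph (n : ℕ) (E : Finset WEdge) : Prop :=
  ∀ e ∈ E, 1 ≤ e.src ∧ e.src ≤ n ∧ 1 ≤ e.tgt ∧ e.tgt ≤ n

/-- `M` weight-bounded: all weights have absolute value at most `M - 1`. -/
def WtBounded (M : ℤ) (E : Finset WEdge) : Prop := ∀ e ∈ E, |e.wt| ≤ M - 1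

/-- `dtsm(u,v) = (tsm v - tsm u) mod M`. -/
def dtsm (M : ℤ) (tsm : ℕ → ℤ) (u v : ℕ) : ℤ := (tsm v - tsm u) % M

/-- `dtsm⁺(u,v)`, for `u ≤ v`: the cumulative sum of consecutive `dtsm`'s, capped at `M`. -/
def dtsmP (M : ℤ) (tsm : ℕ → ℤ) (u v : ℕ) : ℤ :=
  min M (∑ i ∈ Finset.Ico u v, dtsm M tsm i (i + 1))

/-- Antisymmetric extension of `dtsm⁺` to arbitrary pairs. -/
def dtsmE (M : ℤ) (tsm : ℕ → ℤ) (u v : ℕ) : ℤ :=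
  if u ≤ v then dtsmP M tsm u v else - dtsmP M tsm v u

/-- `(u,v)` is `tsm`-big. -/
def TsmBig (M : ℤ) (tsm : ℕ → ℤ) (u v : ℕ) : Prop :=
  ∃ w1 w2 : ℕ, u ≤ w1 ∧ w1 < w2 ∧ w2 ≤ v ∧ M ≤ dtsm M tsm u w1 + dtsm M tsm w1 w2

/-- `tsm` is a time-stamping modulo `M` on vertices `{1,…,n}`. -/
def TSM (M : ℤ) (n : ℕ) (tsm : ℕ → ℤ) : Prop :=
  ∀ v, 1 ≤ v → v ≤ n → 0 ≤ tsm v ∧ tsm v < M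

/-- `tsm` weakly satisfies the graph (forward/backward conditions). -/
def WeaklySat (M : ℤ) (E : Finset WEdge) (tsm : ℕ → ℤ) : Prop :=
  ∀ e ∈ E,
    (e.src ≤ e.tgt → ¬ TsmBig M tsm e.src e.tgt ∧ dtsm M tsm e.src e.tgt ≤ e.wt) ∧
    (e.tgt < e.src → TsmBig M tsm e.tgt e.src ∨ - e.wt ≤ dtsm M tsm e.tgt e.src)

/-- `(u,v) ∈ geqFr`: fractional part of `ts u` must be ≥ that of `ts v`. -/
def geqFr (M : ℤ) (tsm : ℕ → ℤ) (E : Finset WEdge) (u v : ℕ) : Prop :=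
  (∃ e ∈ E, e.src = u ∧ e.tgt = v ∧ dtsmE M tsm u v = e.wt) ∨
  (v + 1 = u ∧ dtsmE M tsm u v = 0)

/-- `(u,v) ∈ gtFr`: fractional part of `ts u` must be > that of `ts v`. -/
def gtFr (M : ℤ) (tsm : ℕ → ℤ) (E : Finset WEdge) (u v : ℕ) : Prop :=
  ∃ e ∈ E, e.strict = true ∧ e.src = u ∧ e.tgt = v ∧ dtsmE M tsm u v = e.wt

open Classical in
/-- Number of `gtFr` edges used by the path `p 0, p 1, …, p k`. -/
noncomputable def gtCount (M : ℤ) (tsm : ℕ → ℤ) (E : Finset WEdge) (k : ℕ) (p : ℕ → ℕ) : ℕ :=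
  ((Finset.range k).filter (fun i => gtFr M tsm E (p i) (p (i + 1)))).card

/-!
Write `U v = ∑_{i < v} dtsm(i, i+1)` for the unwrapping of `tsm`. Weak satisfaction says exactly
that `U tgt - U src ≤ α` on every edge, and `geqFr`/`gtFr` are the edges on which this is tight
(plus the zero steps between neighbours). Given such a `tsm`, `ts = U + f` realizes the graph as
soon as `f` takes values in `[0, 1)`, decreases along `geqFr` and strictly along `gtFr`; counting
the vertices reachable by `geqFr*` gives such an `f` exactly when no `gtFr` edge closes a `geqFr*`
cycle.

Conversely, every gap between consecutive time stamps larger than `M - 1` can be shrunk to just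
above `M - 1` without breaking a constraint, since all weights are below `M` in absolute value.
After that, `tsm = ⌊ts⌋ mod M` unwraps to `⌊ts⌋` up to a constant, so tight edges have integral
length and the fractional part of `ts` decreases along `geqFr` and strictly along `gtFr`.
-/

open Relation

lemma satEdge_iff {ts : ℕ → ℝ} {e : WEdge} :
    satEdge ts e ↔ ts e.tgt - ts e.src ≤ e.wt ∧ (e.strict → ts e.tgt - ts e.src < e.wt) := by
  unfold satEdge
  cases e.strict
  · simp only [Bool.false_eq_true, ite_false, false_implies, and_true]
  · simp only [ite_true, true_implies]
    exact ⟨fun h => ⟨h.le, h⟩, And.right⟩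

lemma WtBounded.abs_lt {M : ℤ} {E : Finset WEdge} (hW : WtBounded M E) {e : WEdge} (he : e ∈ E) :
    |e.wt| < M :=
  (hW e he).trans_lt (sub_one_lt M)

lemma geqFr_of_gtFr {M : ℤ} {tsm : ℕ → ℤ} {E : Finset WEdge} {u v : ℕ}
    (h : gtFr M tsm E u v) : geqFr M tsm E u v :=
  let ⟨e, he, _, hsrc, htgt, hwt⟩ := h
  Or.inl ⟨e, he, hsrc, htgt, hwt⟩

section Unwrap

variable {M : ℤ} {tsm : ℕ → ℤ} {E : Finset WEdge} {u v : ℕ}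

def unwrap (M : ℤ) (tsm : ℕ → ℤ) (v : ℕ) : ℤ :=
  ∑ i ∈ range v, dtsm M tsm i (i + 1)

lemma unwrap_succ (v : ℕ) : unwrap M tsm (v + 1) = unwrap M tsm v + dtsm M tsm v (v + 1) :=
  sum_range_succ _ _

lemma dtsm_nonneg (hM : 0 < M) (u v : ℕ) : 0 ≤ dtsm M tsm u v :=
  Int.emod_nonneg _ hM.ne'

lemma unwrap_mono (hM : 0 < M) : Monotone (unwrap M tsm) :=
  monotone_nat_of_le_succ (f := unwrap M tsm) fun v => by
    rw [unwrap_succ]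
    linarith [dtsm_nonneg (tsm := tsm) hM v (v + 1)]

lemma unwrap_modEq (v : ℕ) : unwrap M tsm v ≡ tsm v - tsm 0 [ZMOD M] := by
  induction v with
  | zero => simp [unwrap, Int.ModEq]
  | succ v ih =>
    rw [unwrap_succ]
    calc unwrap M tsm v + dtsm M tsm v (v + 1)
        ≡ (tsm v - tsm 0) + (tsm (v + 1) - tsm v) [ZMOD M] := ih.add (Int.mod_modEq _ _)
      _ = tsm (v + 1) - tsm 0 := by ring

lemma dtsm_eq_emod_unwrap (u v : ℕ) :
    dtsm M tsm u v = (unwrap M tsm v - unwrap M tsm u) % M := by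
  rw [(unwrap_modEq v).sub (unwrap_modEq u), dtsm]
  ring_nf

lemma dtsm_le_unwrap_sub (hM : 0 < M) (h : u ≤ v) :
    dtsm M tsm u v ≤ unwrap M tsm v - unwrap M tsm u := by
  have h₀ : 0 ≤ unwrap M tsm v - unwrap M tsm u := sub_nonneg.2 (unwrap_mono hM h)
  rw [dtsm_eq_emod_unwrap, Int.emod_def]
  linarith [mul_nonneg hM.le (Int.ediv_nonneg h₀ hM.le)]

lemma dtsm_eq_unwrap_sub (hM : 0 < M) (h : u ≤ v) (hlt : unwrap M tsm v - unwrap M tsm u < M) :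
    dtsm M tsm u v = unwrap M tsm v - unwrap M tsm u := by
  rw [dtsm_eq_emod_unwrap]
  exact Int.emod_eq_of_lt (sub_nonneg.2 (unwrap_mono hM h)) hlt

lemma tsmBig_iff (hM : 0 < M) (h : u ≤ v) :
    TsmBig M tsm u v ↔ M ≤ unwrap M tsm v - unwrap M tsm u := by
  constructor
  · rintro ⟨w₁, w₂, hw₁, hw₁₂, hw₂, hbig⟩
    have := dtsm_le_unwrap_sub (tsm := tsm) hM hw₁
    have := dtsm_le_unwrap_sub (tsm := tsm) hM hw₁₂.le
    have := unwrap_mono (tsm := tsm) hM hw₂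
    omega
  · induction v, h using Nat.le_induction with
    | base => omega
    | succ v huv ih =>
      intro hMv
      by_cases hbig : M ≤ unwrap M tsm v - unwrap M tsm u
      · obtain ⟨w₁, w₂, hw₁, hw₁₂, hw₂, h⟩ := ih hbig
        exact ⟨w₁, w₂, hw₁, hw₁₂, by omega, h⟩
      · refine ⟨v, v + 1, huv, v.lt_succ_self, le_rfl, ?_⟩
        rw [dtsm_eq_unwrap_sub hM huv (by omega)]
        rw [unwrap_succ] at hMv
        omega

lemma dtsmP_eq (h : u ≤ v) : dtsmP M tsm u v = min M (unwrap M tsm v - unwrap M tsm u) := by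
  rw [dtsmP, sum_Ico_eq_sub _ h]
  rfl

lemma dtsmE_eq_iff {a : ℤ} (ha : |a| < M) :
    dtsmE M tsm u v = a ↔ unwrap M tsm v - unwrap M tsm u = a := by
  rw [abs_lt] at ha
  unfold dtsmE
  split_ifs with h
  · rw [dtsmP_eq h, min_def]
    split_ifs <;> omega
  · rw [dtsmP_eq (by omega), min_def]
    split_ifs <;> omega

lemma weaklySat_iff (hM : 0 < M) (hW : WtBounded M E) :
    WeaklySat M E tsm ↔ ∀ e ∈ E, unwrap M tsm e.tgt - unwrap M tsm e.src ≤ e.wt := by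
  refine forall₂_congr fun e he => ?_
  have hw := abs_lt.1 (hW.abs_lt he)
  rcases le_or_gt e.src e.tgt with h | h
  · have hle := dtsm_le_unwrap_sub (tsm := tsm) hM h
    have heq := dtsm_eq_unwrap_sub (tsm := tsm) hM h
    simp only [h, not_lt.2 h, tsmBig_iff hM h, true_implies, false_implies, and_true, not_le]
    exact ⟨fun ⟨hlt, hd⟩ => heq hlt ▸ hd, fun hd => ⟨by omega, hle.trans hd⟩⟩
  · have hle := dtsm_le_unwrap_sub (tsm := tsm) hM h.le
    have heq := dtsm_eq_unwrap_sub (tsm := tsm) hM h.le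
    simp only [h, not_le.2 h, tsmBig_iff hM h.le, true_implies, false_implies, true_and]
    refine ⟨fun hd => hd.elim (fun hbig => by omega) (fun hd => by omega), fun hd => ?_⟩
    by_cases hbig : M ≤ unwrap M tsm e.src - unwrap M tsm e.tgt
    · exact Or.inl hbig
    · exact Or.inr (by rw [heq (by omega)]; omega)

lemma geqFr_iff (hM : 0 < M) (hW : WtBounded M E) :
    geqFr M tsm E u v ↔
      (∃ e ∈ E, e.src = u ∧ e.tgt = v ∧ unwrap M tsm v - unwrap M tsm u = e.wt) ∨
        (v + 1 = u ∧ unwrap M tsm v = unwrap M tsm u) := by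
  refine or_congr (exists_congr fun e => and_congr_right fun he => ?_) (and_congr_right fun _ => ?_)
  · rw [dtsmE_eq_iff (hW.abs_lt he)]
  · rw [dtsmE_eq_iff (by simpa using hM), sub_eq_zero]

lemma gtFr_iff (hW : WtBounded M E) :
    gtFr M tsm E u v ↔
      ∃ e ∈ E, e.strict = true ∧ e.src = u ∧ e.tgt = v ∧
        unwrap M tsm v - unwrap M tsm u = e.wt :=
  exists_congr fun e => and_congr_right fun he => by rw [dtsmE_eq_iff (hW.abs_lt he)]

end Unwrap

theorem exists_potential {α : Type*} {R Q : α → α → Prop} (s : Finset α)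
    (hQR : ∀ a b, Q a b → R a b) (hQs : ∀ a b, Q a b → a ∈ s)
    (hacyc : ∀ a b, Q a b → ¬ ReflTransGen R b a) :
    ∃ f : α → ℝ, (∀ a, 0 ≤ f a ∧ f a < 1) ∧ (∀ a b, R a b → f b ≤ f a) ∧
      ∀ a b, Q a b → f b < f a := by
  classical
  set reach : α → Finset α := fun a => s.filter (ReflTransGen R a)
  have reach_anti {a b : α} (hab : ReflTransGen R a b) : reach b ⊆ reach a := fun w hw => by
    simp only [reach, mem_filter] at hw ⊢
    exact ⟨hw.1, hab.trans hw.2⟩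
  refine ⟨fun a => (reach a).card / (s.card + 1), fun a => ⟨by positivity, ?_⟩,
    fun a b hab => ?_, fun a b hab => ?_⟩
  · rw [div_lt_one (by positivity)]
    exact_mod_cast Nat.lt_succ_of_le (card_filter_le _ _)
  · dsimp only
    gcongr
    exact reach_anti (.single hab)
  · have hssub : reach b ⊂ reach a := (ssubset_iff_of_subset (reach_anti (.single (hQR a b hab)))).2
      ⟨a, mem_filter.2 ⟨hQs a b hab, .refl⟩, fun h => hacyc a b hab (mem_filter.1 h).2⟩
    dsimp only
    gcongr

theorem exists_realizer_of_weaklySat {M : ℤ} (hM : 0 < M) {n : ℕ} {E : Finset WEdge}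
    {tsm : ℕ → ℤ} (hW : WtBounded M E) (hWS : WeaklySat M E tsm)
    (hacyc : ¬ ∃ u v : ℕ, gtFr M tsm E u v ∧ ReflTransGen (geqFr M tsm E) v u) :
    ∃ ts : ℕ → ℝ, Realizes n E ts := by
  obtain ⟨f, hf, hf_geq, hf_gt⟩ := exists_potential (E.image WEdge.src)
    (fun _ _ => geqFr_of_gtFr) (fun _ _ ⟨e, he, _, hsrc, _⟩ => hsrc ▸ mem_image_of_mem _ he)
    (fun a b hab hba => hacyc ⟨a, b, hab, hba⟩)
  have hmono : Monotone fun v => (unwrap M tsm v : ℝ) + f v := monotone_nat_of_le_succ fun v => by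
    rcases (dtsm_nonneg (tsm := tsm) hM v (v + 1)).eq_or_lt with h₀ | hpos
    · have hU : unwrap M tsm (v + 1) = unwrap M tsm v := by rw [unwrap_succ, ← h₀, add_zero]
      have := hf_geq _ _ ((geqFr_iff hM hW).2 (Or.inr ⟨rfl, hU.symm⟩))
      simp only [hU]
      linarith
    · have : (unwrap M tsm v : ℝ) + 1 ≤ unwrap M tsm (v + 1) := by
        exact_mod_cast (show unwrap M tsm v + 1 ≤ unwrap M tsm (v + 1) by rw [unwrap_succ]; omega)
      linarith [hf v, hf (v + 1)]
  refine ⟨_, fun u v _ huv _ => hmono huv, fun e he => satEdge_iff.2 ?_⟩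
  rcases ((weaklySat_iff hM hW).1 hWS e he).lt_or_eq with hlt | htight
  · have : (unwrap M tsm e.tgt : ℝ) - unwrap M tsm e.src + 1 ≤ e.wt := by
      exact_mod_cast (show unwrap M tsm e.tgt - unwrap M tsm e.src + 1 ≤ e.wt by omega)
    constructor <;> intros <;> linarith [hf e.src, hf e.tgt]
  · have hcast : (unwrap M tsm e.tgt : ℝ) - unwrap M tsm e.src = e.wt := by exact_mod_cast htight
    have := hf_geq _ _ ((geqFr_iff hM hW).2 (Or.inl ⟨e, he, rfl, rfl, htight⟩))
    refine ⟨by linarith, fun hs => ?_⟩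
    linarith [hf_gt _ _ ((gtFr_iff hW).2 ⟨e, he, hs, rfl, rfl, htight⟩)]

section Crop

variable {M : ℤ} {ts : ℕ → ℝ} {x d : ℝ}

-- Any cap strictly between `M - 1` and `⌊x⌋ + M - x` would do.
noncomputable def cropGap (M : ℤ) (x d : ℝ) : ℝ :=
  min d (M - 1 + (1 - Int.fract x) / 2)

lemma cropGap_le : cropGap M x d ≤ d :=
  min_le_left _ _

lemma cropGap_nonneg (hM : 0 < M) (hd : 0 ≤ d) : 0 ≤ cropGap M x d := by
  have : (1 : ℝ) ≤ M := by exact_mod_cast hM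
  exact le_min hd (by linarith [Int.fract_lt_one x])

lemma cropGap_eq_or_gt : cropGap M x d = d ∨ M - 1 < cropGap M x d :=
  (min_choice _ _).imp id fun h => by rw [cropGap, h]; linarith [Int.fract_lt_one x]

lemma floor_add_cropGap_le : ⌊x + cropGap M x d⌋ ≤ ⌊x⌋ + (M - 1) := by
  have hlt : x + cropGap M x d < ((⌊x⌋ + M : ℤ) : ℝ) := by
    have : cropGap M x d ≤ M - 1 + (1 - Int.fract x) / 2 := min_le_right _ _
    push_cast
    linarith [Int.floor_add_fract x, Int.fract_lt_one x]
  have := Int.floor_lt.2 hlt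
  omega

noncomputable def crop (M : ℤ) (ts : ℕ → ℝ) : ℕ → ℝ
  | 0 => ts 0
  | i + 1 => crop M ts i + cropGap M (crop M ts i) (ts (i + 1) - ts i)

lemma crop_mono (hM : 0 < M) (hts : Monotone ts) : Monotone (crop M ts) :=
  monotone_nat_of_le_succ (f := crop M ts) fun i =>
    le_add_of_nonneg_right (cropGap_nonneg hM (sub_nonneg.2 (hts i.le_succ)))

lemma floor_crop_succ_sub_le (i : ℕ) : ⌊crop M ts (i + 1)⌋ - ⌊crop M ts i⌋ ≤ M - 1 := by
  have := floor_add_cropGap_le (M := M) (x := crop M ts i) (d := ts (i + 1) - ts i)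
  rw [crop]
  omega

lemma crop_sub_crop (hM : 0 < M) (hts : Monotone ts) {u v : ℕ} (h : u ≤ v) :
    crop M ts v - crop M ts u ≤ ts v - ts u ∧
      (crop M ts v - crop M ts u = ts v - ts u ∨ M - 1 < crop M ts v - crop M ts u) := by
  induction v, h using Nat.le_induction with
  | base => simp
  | succ v huv ih =>
    have hd : 0 ≤ ts (v + 1) - ts v := sub_nonneg.2 (hts v.le_succ)
    have h₀ := cropGap_nonneg (x := crop M ts v) hM hd
    have h₁ := cropGap_le (M := M) (x := crop M ts v) (d := ts (v + 1) - ts v)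
    have h₂ := sub_nonneg.2 (hts huv)
    rw [crop]
    obtain ⟨ih₁, ih₂⟩ := ih
    refine ⟨by linarith, ?_⟩
    rcases ih₂, cropGap_eq_or_gt (M := M) (x := crop M ts v) (d := ts (v + 1) - ts v)
      with ⟨ih₂ | ih₂, hg | hg⟩
    all_goals first | exact Or.inl (by linarith) | exact Or.inr (by linarith)

lemma satEdge_crop (hM : 0 < M) (hts : Monotone ts) {e : WEdge} (hw : |e.wt| ≤ M - 1)
    (he : satEdge ts e) : satEdge (crop M ts) e := by
  rw [satEdge_iff] at he ⊢
  have hw' : (1 - M : ℝ) ≤ e.wt := by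
    exact_mod_cast (show 1 - M ≤ e.wt by linarith [neg_abs_le e.wt])
  rcases le_or_gt e.src e.tgt with h | h
  · have := (crop_sub_crop hM hts h).1
    exact ⟨by linarith [he.1], fun hs => by linarith [he.2 hs]⟩
  · obtain ⟨-, hsame | hlong⟩ := crop_sub_crop hM hts h.le
    · exact ⟨by linarith [he.1], fun hs => by linarith [he.2 hs]⟩
    · exact ⟨by linarith, fun _ => by linarith⟩

end Crop

lemma exists_monotone_of_realizes {n : ℕ} {E : Finset WEdge} {ts : ℕ → ℝ} (hG : InGraph n E)
    (h : Realizes n E ts) : ∃ ts' : ℕ → ℝ, Monotone ts' ∧ ∀ e ∈ E, satEdge ts' e := by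
  refine ⟨fun v => ts (max 1 (min v n)), fun u v huv => ?_, fun e he => ?_⟩
  · rcases Nat.eq_zero_or_pos n with rfl | hn
    · simp
    · exact h.1 _ _ (by omega) (by omega) (by omega)
  · obtain ⟨hs₁, hs₂, ht₁, ht₂⟩ := hG e he
    have hs : max 1 (min e.src n) = e.src := by omega
    have ht : max 1 (min e.tgt n) = e.tgt := by omega
    simpa only [satEdge, hs, ht] using h.2 e he

lemma floor_sub_floor_le {x y : ℝ} {w : ℤ} (h : y - x ≤ w) : ⌊y⌋ - ⌊x⌋ ≤ w := by
  have : ⌊y⌋ ≤ ⌊x + w⌋ := Int.floor_le_floor (by linarith)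
  rw [Int.floor_add_intCast] at this
  omega

lemma fract_sub_fract (x y : ℝ) : Int.fract y - Int.fract x = y - x - ((⌊y⌋ - ⌊x⌋ : ℤ) : ℝ) := by
  rw [Int.fract, Int.fract]
  push_cast
  ring

lemma unwrap_emod_eq_sub {M : ℤ} {F : ℕ → ℤ} (hF : ∀ i, 0 ≤ F (i + 1) - F i ∧ F (i + 1) - F i < M)
    (v : ℕ) : unwrap M (fun w => F w % M) v = F v - F 0 := by
  induction v with
  | zero => simp [unwrap]
  | succ v ih =>
    rw [unwrap_succ, ih, dtsm, ← Int.sub_emod, Int.emod_eq_of_lt (hF v).1 (hF v).2]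
    ring

theorem exists_tsm_of_slow_realizer {M : ℤ} (hM : 0 < M) {n : ℕ} {E : Finset WEdge}
    (hW : WtBounded M E) {c : ℕ → ℝ} (hmono : Monotone c)
    (hslow : ∀ i, ⌊c (i + 1)⌋ - ⌊c i⌋ ≤ M - 1) (hc : ∀ e ∈ E, satEdge c e) :
    ∃ tsm : ℕ → ℤ, TSM M n tsm ∧ WeaklySat M E tsm ∧
      ¬ ∃ u v : ℕ, gtFr M tsm E u v ∧ ReflTransGen (geqFr M tsm E) v u := by
  set tsm : ℕ → ℤ := fun v => ⌊c v⌋ % M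
  have hU (u v : ℕ) : unwrap M tsm v - unwrap M tsm u = ⌊c v⌋ - ⌊c u⌋ := by
    have := unwrap_emod_eq_sub (M := M) (F := fun v => ⌊c v⌋)
      fun i => ⟨sub_nonneg.2 (Int.floor_le_floor (hmono i.le_succ)), by linarith [hslow i]⟩
    rw [this, this]
    ring
  refine ⟨tsm, fun v _ _ => ⟨Int.emod_nonneg _ hM.ne', Int.emod_lt_of_pos _ hM⟩, ?_, ?_⟩
  · rw [weaklySat_iff hM hW]
    intro e he
    rw [hU]
    exact floor_sub_floor_le (satEdge_iff.1 (hc e he)).1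
  · rintro ⟨u, v, huv, hvu⟩
    have hgeq (a b : ℕ) (hab : geqFr M tsm E a b) : Int.fract (c b) ≤ Int.fract (c a) := by
      rw [← sub_nonpos, fract_sub_fract]
      rcases (geqFr_iff hM hW).1 hab with ⟨e, he, rfl, rfl, htight⟩ | ⟨rfl, htight⟩
      · rw [← hU, htight]
        linarith [(satEdge_iff.1 (hc e he)).1]
      · rw [← hU, htight, sub_self, Int.cast_zero]
        linarith [hmono b.le_succ]
    have hgt : Int.fract (c v) < Int.fract (c u) := by
      rw [← sub_neg, fract_sub_fract]
      obtain ⟨e, he, hs, rfl, rfl, htight⟩ := (gtFr_iff hW).1 huv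
      rw [← hU, htight]
      linarith [(satEdge_iff.1 (hc e he)).2 hs]
    have hpath {a b : ℕ} (hab : ReflTransGen (geqFr M tsm E) a b) :
        Int.fract (c b) ≤ Int.fract (c a) := by
      induction hab with
      | refl => exact le_rfl
      | tail _ hbc ih => exact (hgeq _ _ hbc).trans ih
    exact (hpath hvu).not_gt hgt

theorem mixed_realizable_iff (M : ℤ) (hM : 1 ≤ M) (n : ℕ) (E : Finset WEdge)
    (hG : InGraph n E) (hW : WtBounded M E) :
    (∃ ts : ℕ → ℝ, Realizes n E ts) ↔
      ∃ tsm : ℕ → ℤ, TSM M n tsm ∧ WeaklySat M E tsm ∧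
        ¬ ∃ u v : ℕ, gtFr M tsm E u v ∧ Relation.ReflTransGen (geqFr M tsm E) v u := by
  constructor
  · rintro ⟨ts, hts⟩
    obtain ⟨ts', hmono, hE⟩ := exists_monotone_of_realizes hG hts
    exact exists_tsm_of_slow_realizer hM hW (crop_mono hM hmono) floor_crop_succ_sub_le
      fun e he => satEdge_crop hM hmono (hW e he) (hE e he)
  · rintro ⟨tsm, -, hWS, hacyc⟩
    exact exists_realizer_of_weaklySat hM hW hWS hacyc
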